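/- (Main bound) Under the following assumptions: finite MDP with discount γ ∈ (0,1); policies π_h (expert) and π_n (novice) with strictly positive action probabilities; Q* the Q-function of π_h with oscillation |Q*(s,a)−Q*(s,a')| ≤ U; per-state log-probability oscillation of both policies bounded by M; d_pref a state distribution, ρ_pref^s preference-pair distributions, δ_dist = D_TV(d_{π_n}, d_pref), δ_pref = E_{s∼d_pref} D_TV(ρ_ideal^s, ρ_pref^s) with ρ_ideal^s(a⁺,a⁻)=π_h(a⁺|s)π_n(a⁻|s), and ε = L_pref(π_n) − L_pref(π_h) where L_pref(π) = E_{s∼d_pref} E_{(a⁺,a⁻)∼ρ_pref^s}[−log σ(β(log π(a⁺|s) − log π(a⁻|s)))] for β > 0. Then J(π_h) − J(π_n) ≤ (U/(1−γ)) · ( sqrt( (ε + 4(βM + log 2)δ_pref)/(2β) + βM²/8 ) + 2δ_dist ). -/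

import Mathlib

open Finset

section MDP

variable {S A : Type*} [Fintype S] [Fintype A]

/-- `visit P π d0 t s` is the probability of being in state `s` at time `t`
when following policy `π` in the MDP with transition kernel `P`, starting
from the initial state distribution `d0`. -/
noncomputable def visit (P : S → A → S → ℝ) (π : S → A → ℝ) (d0 : S → ℝ) :
    ℕ → S → ℝ
  | 0 => d0
  | (t + 1) => fun s' => ∑ s, ∑ a, visit P π d0 t s * π s a * P s a s'

/-- Expected discounted return of policy `π` from initial distribution `d0`:
`J(π) = E_{τ∼P_π}[∑_t γ^t r(s_t,a_t)]`. -/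
noncomputable def Jval (P : S → A → S → ℝ) (r : S → A → ℝ) (γ : ℝ)
    (π : S → A → ℝ) (d0 : S → ℝ) : ℝ :=
  ∑' t : ℕ, γ ^ t * ∑ s, ∑ a, visit P π d0 t s * π s a * r s a

/-- Q-function of policy `π`:
`Q^π(s,a) = E[∑_t γ^t r(s_t,a_t) | s_0 = s, a_0 = a]` under `π`. -/
noncomputable def Qfun (P : S → A → S → ℝ) (r : S → A → ℝ) (γ : ℝ)
    (π : S → A → ℝ) (s : S) (a : A) : ℝ :=
  r s a + ∑' t : ℕ, γ ^ (t + 1) *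
    ∑ s', ∑ a', visit P π (P s a) t s' * π s' a' * r s' a'

/-- Discounted state occupancy `d_π(s) = (1−γ) ∑_t γ^t Pr[s_t = s]`. -/
noncomputable def dOcc (P : S → A → S → ℝ) (γ : ℝ) (π : S → A → ℝ)
    (d0 : S → ℝ) (s : S) : ℝ :=
  (1 - γ) * ∑' t : ℕ, γ ^ t * visit P π d0 t s

end MDP

noncomputable def tvDist {X : Type*} [Fintype X] (P Q : X → ℝ) : ℝ :=
  (∑ x, |P x - Q x|) / 2

noncomputable def sigmoid (x : ℝ) : ℝ := 1 / (1 + Real.exp (-x))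

/-- Preference loss of policy `π` over the empirical preference-pair
distributions `ρpref`. -/
noncomputable def Lpref {S A : Type*} [Fintype S] [Fintype A]
    (dpref : S → ℝ) (ρpref : S → A × A → ℝ) (β : ℝ) (π : S → A → ℝ) : ℝ :=
  ∑ s, dpref s * ∑ p : A × A, ρpref s p *
    (-(Real.log (sigmoid (β * (Real.log (π s p.1) - Real.log (π s p.2))))))

/-!
By the performance-difference identity, `J(π_h) - J(π_n)` is `1/(1-γ)` times the
`d_{π_n}`-average of `∑ₐ (π_h - π_n)(a|s) Q*(s,a)`. Centring `Q*` at the midpoint of its range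
bounds this by `U · D_TV(π_h(·|s), π_n(·|s))`, and replacing `d_{π_n}` by `d_pref` costs
`2U δ_dist`.

For the preference part write `-log σ(x) = -x/2 + log (2 cosh (x/2))` with
`log 2 ≤ log (2 cosh u) ≤ log 2 + u²/2`. At each state the ideal-pair loss gap is then at least
`β/2` times the symmetrised KL divergence of `π_h` and `π_n` minus `β²M²/8`, and the symmetrised KL
divergence dominates `4 D_TV²` (Cauchy–Schwarz and "logarithmic mean ≤ arithmetic mean"); Jensen
gives the square root. Since the losses lie in `[0, βM + log 2]`, trading the ideal pairs for
`ρ_pref` costs `4(βM + log 2) δ_pref`.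
-/

open Matrix

theorem summable_geometric_mul_of_abs_le {γ C : ℝ} (hγ0 : 0 ≤ γ) (hγ1 : γ < 1) {f : ℕ → ℝ}
    (hf : ∀ t, |f t| ≤ C) : Summable fun t => γ ^ t * f t :=
  ((summable_geometric_of_lt_one hγ0 hγ1).mul_right C).of_norm_bounded fun t => by
    rw [Real.norm_eq_abs, abs_mul, abs_pow, abs_of_nonneg hγ0]
    exact mul_le_mul_of_nonneg_left (hf t) (pow_nonneg hγ0 t)

section Matrix

variable {S : Type*} [Fintype S]

theorem dotProduct_tsum {f : ℕ → S → ℝ} (hf : Summable f) (d : S → ℝ) :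
    d ⬝ᵥ ∑' t, f t = ∑' t, d ⬝ᵥ f t :=
  (dotProductBilin ℝ ℝ d).toContinuousLinearMap.map_tsum hf

theorem mulVec_tsum {f : ℕ → S → ℝ} (hf : Summable f) (K : Matrix S S ℝ) :
    K *ᵥ ∑' t, f t = ∑' t, K *ᵥ f t :=
  (mulVecLin K).toContinuousLinearMap.map_tsum hf

variable [DecidableEq S] {K : Matrix S S ℝ} {γ : ℝ}

theorem abs_mulVec_le_of_mem_rowStochastic (hK : K ∈ rowStochastic ℝ S) {x : S → ℝ} {C : ℝ}
    (hx : ∀ s, |x s| ≤ C) (s : S) : |(K *ᵥ x) s| ≤ C :=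
  calc |(K *ᵥ x) s| = |∑ s', K s s' * x s'| := rfl
    _ ≤ ∑ s', K s s' * C := by
      refine (Finset.abs_sum_le_sum_abs _ _).trans (Finset.sum_le_sum fun s' _ => ?_)
      rw [abs_mul, abs_of_nonneg (nonneg_of_mem_rowStochastic hK)]
      exact mul_le_mul_of_nonneg_left (hx s') (nonneg_of_mem_rowStochastic hK)
    _ = C := by rw [← Finset.sum_mul, sum_row_of_mem_rowStochastic hK, one_mul]

theorem summable_discounted_mulVec_apply (hK : K ∈ rowStochastic ℝ S) (hγ0 : 0 ≤ γ)
    (hγ1 : γ < 1) (x : S → ℝ) (s : S) : Summable fun t : ℕ => γ ^ t * (K ^ t *ᵥ x) s :=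
  summable_geometric_mul_of_abs_le hγ0 hγ1 fun t =>
    abs_mulVec_le_of_mem_rowStochastic (pow_mem hK t)
      (fun s' => Finset.single_le_sum (fun i _ => abs_nonneg (x i)) (Finset.mem_univ s')) s

theorem summable_discounted_mulVec (hK : K ∈ rowStochastic ℝ S) (hγ0 : 0 ≤ γ) (hγ1 : γ < 1)
    (x : S → ℝ) : Summable fun t : ℕ => γ ^ t • (K ^ t *ᵥ x) :=
  Pi.summable.2 fun s => by
    simpa only [Pi.smul_apply, smul_eq_mul] using summable_discounted_mulVec_apply hK hγ0 hγ1 x s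

theorem summable_discounted_dotProduct (hK : K ∈ rowStochastic ℝ S) (hγ0 : 0 ≤ γ)
    (hγ1 : γ < 1) (d x : S → ℝ) : Summable fun t : ℕ => γ ^ t * (d ⬝ᵥ (K ^ t *ᵥ x)) := by
  simp only [dotProduct, Finset.mul_sum]
  exact summable_sum fun s _ =>
    ((summable_discounted_mulVec_apply hK hγ0 hγ1 x s).mul_left (d s)).congr fun t => by ring

theorem summable_discounted_vecMul_apply (hK : K ∈ rowStochastic ℝ S) (hγ0 : 0 ≤ γ)
    (hγ1 : γ < 1) (d : S → ℝ) (s : S) : Summable fun t : ℕ => γ ^ t * (d ᵥ* K ^ t) s := by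
  have h : ∀ t : ℕ, (d ᵥ* K ^ t) s = d ⬝ᵥ (K ^ t *ᵥ Pi.single s 1) := fun t => by
    rw [mulVec_single_one]; rfl
  simpa only [h] using summable_discounted_dotProduct hK hγ0 hγ1 d (Pi.single s 1)

end Matrix

theorem two_mul_sq_le_mul_log_sub_log {z : ℝ} (hz : |z| < 1) :
    2 * z ^ 2 ≤ z * (Real.log (1 + z) - Real.log (1 - z)) := by
  have h := (Real.hasSum_log_sub_log_of_abs_lt_one hz).mul_left z
  have := le_hasSum h 0 fun k _ => by
    rw [show z * (2 * (1 / (2 * (k : ℝ) + 1)) * z ^ (2 * k + 1)) =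
      2 * (1 / (2 * k + 1)) * (z ^ (k + 1)) ^ 2 by ring]
    positivity
  calc 2 * z ^ 2 = z * (2 * (1 / (2 * ((0 : ℕ) : ℝ) + 1)) * z ^ (2 * 0 + 1)) := by
        push_cast; ring
    _ ≤ _ := this

theorem two_mul_sq_div_le_mul_log_sub_log {x y : ℝ} (hx : 0 < x) (hy : 0 < y) :
    2 * (x - y) ^ 2 / (x + y) ≤ (x - y) * (Real.log x - Real.log y) := by
  have hxy : 0 < x + y := add_pos hx hy
  set z := (x - y) / (x + y) with hz_def
  have hz : |z| < 1 := by
    rw [abs_div, abs_of_pos hxy, div_lt_one hxy]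
    exact abs_sub_lt_iff.2 ⟨by linarith, by linarith⟩
  have h1 : 1 + z = 2 * x / (x + y) := by rw [hz_def]; field_simp; ring
  have h2 : 1 - z = 2 * y / (x + y) := by rw [hz_def]; field_simp; ring
  have hlog : Real.log (1 + z) - Real.log (1 - z) = Real.log x - Real.log y := by
    rw [h1, h2, Real.log_div (by positivity) hxy.ne', Real.log_div (by positivity) hxy.ne',
      Real.log_mul two_ne_zero hx.ne', Real.log_mul two_ne_zero hy.ne']
    ring
  have h := two_mul_sq_le_mul_log_sub_log hz
  rw [hlog] at h
  calc 2 * (x - y) ^ 2 / (x + y) = (x + y) * (2 * z ^ 2) := by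
        rw [hz_def]; field_simp
    _ ≤ (x + y) * (z * (Real.log x - Real.log y)) := mul_le_mul_of_nonneg_left h hxy.le
    _ = (x - y) * (Real.log x - Real.log y) := by rw [hz_def]; field_simp

section TotalVariation

variable {X : Type*} [Fintype X]

theorem tvDist_le_one {p q : X → ℝ} (hp0 : ∀ x, 0 ≤ p x) (hq0 : ∀ x, 0 ≤ q x)
    (hp1 : ∑ x, p x = 1) (hq1 : ∑ x, q x = 1) : tvDist p q ≤ 1 := by
  have h : ∑ x, |p x - q x| ≤ ∑ x, (p x + q x) := Finset.sum_le_sum fun x _ =>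
    abs_le.2 ⟨by linarith [hp0 x, hq0 x], by linarith [hp0 x, hq0 x]⟩
  rw [Finset.sum_add_distrib, hp1, hq1] at h
  rw [tvDist]
  linarith

theorem abs_sum_mul_sub_sum_mul_le {p q g : X → ℝ} {B : ℝ} (hg : ∀ x, |g x| ≤ B) :
    |∑ x, p x * g x - ∑ x, q x * g x| ≤ 2 * B * tvDist p q :=
  calc |∑ x, p x * g x - ∑ x, q x * g x| = |∑ x, (p x - q x) * g x| := by
        simp only [sub_mul, Finset.sum_sub_distrib]
    _ ≤ ∑ x, |p x - q x| * B := by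
      refine (Finset.abs_sum_le_sum_abs _ _).trans (Finset.sum_le_sum fun x _ => ?_)
      rw [abs_mul]
      exact mul_le_mul_of_nonneg_left (hg x) (abs_nonneg _)
    _ = 2 * B * tvDist p q := by rw [← Finset.sum_mul, tvDist]; ring

theorem abs_sum_mul_sub_sum_mul_le_of_oscillation {p q g : X → ℝ} {U : ℝ}
    (hpq : ∑ x, p x = ∑ x, q x) (hg : ∀ x y, |g x - g y| ≤ U) :
    |∑ x, p x * g x - ∑ x, q x * g x| ≤ U * tvDist p q := by
  rcases isEmpty_or_nonempty X with hX | hX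
  · simp [tvDist]
  obtain ⟨xmax, -, hmax⟩ := Finset.exists_max_image Finset.univ g Finset.univ_nonempty
  obtain ⟨xmin, -, hmin⟩ := Finset.exists_min_image Finset.univ g Finset.univ_nonempty
  set c := (g xmax + g xmin) / 2 with hc_def
  have hc : ∀ x, |g x - c| ≤ U / 2 := fun x => by
    have hrange := (le_abs_self _).trans (hg xmax xmin)
    have hle := hmax x (Finset.mem_univ x)
    have hge := hmin x (Finset.mem_univ x)
    rw [abs_le]
    constructor <;> linarith [hc_def]
  have hshift : ∑ x, p x * g x - ∑ x, q x * g x =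
      ∑ x, p x * (g x - c) - ∑ x, q x * (g x - c) := by
    simp only [mul_sub, Finset.sum_sub_distrib, ← Finset.sum_mul, hpq]
    ring
  calc _ ≤ 2 * (U / 2) * tvDist p q := hshift ▸ abs_sum_mul_sub_sum_mul_le hc
    _ = U * tvDist p q := by ring

theorem four_mul_tvDist_sq_le_sum_mul_log_sub_log {p q : X → ℝ} (hp0 : ∀ x, 0 < p x)
    (hq0 : ∀ x, 0 < q x) (hp1 : ∑ x, p x = 1) (hq1 : ∑ x, q x = 1) :
    4 * tvDist p q ^ 2 ≤ ∑ x, (p x - q x) * (Real.log (p x) - Real.log (q x)) := by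
  have h := Finset.sq_sum_div_le_sum_sq_div Finset.univ (fun x => |p x - q x|)
    (g := fun x => p x + q x) fun x _ => add_pos (hp0 x) (hq0 x)
  rw [Finset.sum_add_distrib, hp1, hq1] at h
  calc 4 * tvDist p q ^ 2 = 2 * ((∑ x, |p x - q x|) ^ 2 / (1 + 1)) := by rw [tvDist]; ring
    _ ≤ 2 * ∑ x, |p x - q x| ^ 2 / (p x + q x) := by gcongr
    _ ≤ ∑ x, (p x - q x) * (Real.log (p x) - Real.log (q x)) := by
      rw [Finset.mul_sum]
      refine Finset.sum_le_sum fun x _ => ?_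
      rw [sq_abs, ← mul_div_assoc]
      exact two_mul_sq_div_le_mul_log_sub_log (hp0 x) (hq0 x)

end TotalVariation

theorem neg_log_sigmoid (x : ℝ) : -Real.log (sigmoid x) = Real.log (1 + Real.exp (-x)) := by
  rw [sigmoid, one_div, Real.log_inv, neg_neg]

theorem neg_log_sigmoid_nonneg (x : ℝ) : 0 ≤ -Real.log (sigmoid x) := by
  rw [neg_log_sigmoid]
  exact Real.log_nonneg (by linarith [Real.exp_pos (-x)])

theorem neg_log_sigmoid_le_abs_add_log_two (x : ℝ) :
    -Real.log (sigmoid x) ≤ |x| + Real.log 2 := by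
  rw [neg_log_sigmoid, ← Real.log_exp |x|, ← Real.log_mul (Real.exp_pos _).ne' two_ne_zero]
  refine Real.log_le_log (by positivity) ?_
  have := Real.exp_le_exp.2 (neg_le_abs x)
  have := Real.one_le_exp (abs_nonneg x)
  linarith

theorem neg_log_sigmoid_eq_neg_half_add_log_two_mul_cosh (x : ℝ) :
    -Real.log (sigmoid x) = -x / 2 + Real.log (2 * Real.cosh (x / 2)) := by
  have h : 1 + Real.exp (-x) = Real.exp (-x / 2) * (2 * Real.cosh (x / 2)) := by
    rw [Real.cosh_eq, mul_div_cancel₀ _ two_ne_zero, mul_add, ← Real.exp_add, ← Real.exp_add]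
    ring_nf
    simp [add_comm]
  rw [neg_log_sigmoid, h, Real.log_mul (Real.exp_pos _).ne' (by positivity), Real.log_exp]

theorem neg_half_add_log_two_le_neg_log_sigmoid (x : ℝ) :
    -x / 2 + Real.log 2 ≤ -Real.log (sigmoid x) := by
  rw [neg_log_sigmoid_eq_neg_half_add_log_two_mul_cosh]
  gcongr
  linarith [Real.one_le_cosh (x / 2)]

theorem neg_log_sigmoid_le_neg_half_add_log_two_add_sq (x : ℝ) :
    -Real.log (sigmoid x) ≤ -x / 2 + Real.log 2 + x ^ 2 / 8 := by
  rw [neg_log_sigmoid_eq_neg_half_add_log_two_mul_cosh,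
    Real.log_mul two_ne_zero (Real.cosh_pos _).ne']
  have hcosh := Real.log_le_log (Real.cosh_pos _) (Real.cosh_le_exp_half_sq (x / 2))
  rw [Real.log_exp] at hcosh
  linarith

section Markov

variable {S A : Type*} [Fintype S] [Fintype A]

def transitionMatrix (P : S → A → S → ℝ) (π : S → A → ℝ) : Matrix S S ℝ :=
  Matrix.of fun s s' => ∑ a, π s a * P s a s'

def expectedReward (r : S → A → ℝ) (π : S → A → ℝ) : S → ℝ :=
  fun s => ∑ a, π s a * r s a

variable [DecidableEq S]

noncomputable def valueFun (P : S → A → S → ℝ) (r : S → A → ℝ) (γ : ℝ) (π : S → A → ℝ) :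
    S → ℝ :=
  ∑' t : ℕ, γ ^ t • (transitionMatrix P π ^ t *ᵥ expectedReward r π)

variable {P : S → A → S → ℝ} {r : S → A → ℝ} {γ : ℝ} {π : S → A → ℝ}

theorem visit_eq_vecMul (d : S → ℝ) (t : ℕ) :
    visit P π d t = d ᵥ* transitionMatrix P π ^ t := by
  induction t with
  | zero => simp [visit]
  | succ t ih =>
    ext s'
    rw [pow_succ, ← vecMul_vecMul, ← ih]
    simp [visit, vecMul, dotProduct, transitionMatrix, Finset.mul_sum, mul_assoc]

theorem sum_visit_mul_reward (d : S → ℝ) (t : ℕ) :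
    ∑ s, ∑ a, visit P π d t s * π s a * r s a =
      d ⬝ᵥ (transitionMatrix P π ^ t *ᵥ expectedReward r π) := by
  rw [dotProduct_mulVec, ← visit_eq_vecMul]
  simp [dotProduct, expectedReward, Finset.mul_sum, mul_assoc]

theorem transitionMatrix_mem_rowStochastic (hP0 : ∀ s a s', 0 ≤ P s a s')
    (hP1 : ∀ s a, ∑ s', P s a s' = 1) (hπ0 : ∀ s a, 0 ≤ π s a) (hπ1 : ∀ s, ∑ a, π s a = 1) :
    transitionMatrix P π ∈ rowStochastic ℝ S := by
  refine mem_rowStochastic_iff_sum.2 ⟨fun s s' => ?_, fun s => ?_⟩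
  · exact Finset.sum_nonneg fun a _ => mul_nonneg (hπ0 s a) (hP0 s a s')
  · simp only [transitionMatrix, of_apply]
    rw [Finset.sum_comm]
    simp [← Finset.mul_sum, hP1, hπ1]

theorem Jval_eq_tsum (d : S → ℝ) :
    Jval P r γ π d =
      ∑' t : ℕ, γ ^ t * (d ⬝ᵥ (transitionMatrix P π ^ t *ᵥ expectedReward r π)) := by
  simp only [Jval, sum_visit_mul_reward]

theorem Jval_eq_dotProduct_valueFun (hγ0 : 0 ≤ γ) (hγ1 : γ < 1)
    (hK : transitionMatrix P π ∈ rowStochastic ℝ S) (d : S → ℝ) :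
    Jval P r γ π d = d ⬝ᵥ valueFun P r γ π := by
  rw [valueFun, dotProduct_tsum (summable_discounted_mulVec hK hγ0 hγ1 _), Jval_eq_tsum]
  simp only [dotProduct_smul, smul_eq_mul]

theorem Qfun_eq (hγ0 : 0 ≤ γ) (hγ1 : γ < 1) (hK : transitionMatrix P π ∈ rowStochastic ℝ S)
    (s : S) (a : A) :
    Qfun P r γ π s a = r s a + γ * (P s a ⬝ᵥ valueFun P r γ π) := by
  rw [← Jval_eq_dotProduct_valueFun hγ0 hγ1 hK, Jval, ← tsum_mul_left, Qfun]
  simp only [pow_succ, mul_comm, mul_assoc]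

theorem valueFun_eq (hγ0 : 0 ≤ γ) (hγ1 : γ < 1)
    (hK : transitionMatrix P π ∈ rowStochastic ℝ S) :
    valueFun P r γ π = expectedReward r π + γ • (transitionMatrix P π *ᵥ valueFun P r γ π) := by
  have hs := summable_discounted_mulVec hK hγ0 hγ1 (expectedReward r π)
  conv_lhs => rw [valueFun, hs.tsum_eq_zero_add]
  rw [valueFun, mulVec_tsum hs, ← tsum_const_smul'']
  simp only [pow_zero, one_smul, one_mulVec, pow_succ', mul_smul, mulVec_smul, ← mulVec_mulVec]

theorem sum_mul_Qfun (hγ0 : 0 ≤ γ) (hγ1 : γ < 1) (hK : transitionMatrix P π ∈ rowStochastic ℝ S)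
    (π' : S → A → ℝ) (s : S) :
    ∑ a, π' s a * Qfun P r γ π s a =
      expectedReward r π' s + γ * (transitionMatrix P π' *ᵥ valueFun P r γ π) s := by
  simp only [Qfun_eq hγ0 hγ1 hK, mul_add, Finset.sum_add_distrib, expectedReward, mulVec,
    dotProduct, transitionMatrix, of_apply, Finset.mul_sum, Finset.sum_mul]
  congr 1
  rw [Finset.sum_comm]
  exact Finset.sum_congr rfl fun _ _ => Finset.sum_congr rfl fun _ _ => by ring

theorem sum_mul_Qfun_self (hγ0 : 0 ≤ γ) (hγ1 : γ < 1)
    (hK : transitionMatrix P π ∈ rowStochastic ℝ S) (s : S) :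
    ∑ a, π s a * Qfun P r γ π s a = valueFun P r γ π s := by
  rw [sum_mul_Qfun hγ0 hγ1 hK π s]
  conv_rhs => rw [valueFun_eq hγ0 hγ1 hK]
  rfl

theorem performance_difference (hγ0 : 0 ≤ γ) (hγ1 : γ < 1) {πh πn : S → A → ℝ}
    (hKh : transitionMatrix P πh ∈ rowStochastic ℝ S)
    (hKn : transitionMatrix P πn ∈ rowStochastic ℝ S) (d : S → ℝ) :
    Jval P r γ πh d - Jval P r γ πn d =
      ∑ s, (∑' t : ℕ, γ ^ t * visit P πn d t s) *
        ∑ a, (πh s a - πn s a) * Qfun P r γ πh s a := by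
  set K := transitionMatrix P πn
  set v := valueFun P r γ πh
  set R := expectedReward r πn
  set g : S → ℝ := fun s => ∑ a, (πh s a - πn s a) * Qfun P r γ πh s a
  have hg : g = v - (R + γ • (K *ᵥ v)) := funext fun s => by
    simp only [g, sub_mul, Finset.sum_sub_distrib, sum_mul_Qfun_self hγ0 hγ1 hKh,
      sum_mul_Qfun hγ0 hγ1 hKh πn]
    rfl
  have hw := summable_discounted_dotProduct hKn hγ0 hγ1 d v
  have hF := summable_discounted_dotProduct hKn hγ0 hγ1 d R
  have hstep : ∀ t : ℕ, γ ^ t * (d ᵥ* K ^ t ⬝ᵥ g) = γ ^ t * (d ⬝ᵥ (K ^ t *ᵥ v)) -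
      γ ^ t * (d ⬝ᵥ (K ^ t *ᵥ R)) - γ ^ (t + 1) * (d ⬝ᵥ (K ^ (t + 1) *ᵥ v)) := fun t => by
    rw [← dotProduct_mulVec, hg, pow_succ, pow_succ, ← mulVec_mulVec]
    simp only [mulVec_sub, mulVec_add, mulVec_smul, dotProduct_sub, dotProduct_add,
      dotProduct_smul, smul_eq_mul]
    ring
  have hswap : ∑ s, (∑' t : ℕ, γ ^ t * visit P πn d t s) * g s =
      ∑' t : ℕ, γ ^ t * (d ᵥ* K ^ t ⬝ᵥ g) := by
    simp only [← tsum_mul_right, dotProduct, Finset.mul_sum, visit_eq_vecMul]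
    rw [← Summable.tsum_finsetSum fun s _ =>
      (summable_discounted_vecMul_apply hKn hγ0 hγ1 d s).mul_right (g s)]
    simp only [mul_assoc]
  rw [hswap, tsum_congr hstep, Summable.tsum_sub (hw.sub hF) ((summable_nat_add_iff 1).2 hw),
    Summable.tsum_sub hw hF, Jval_eq_dotProduct_valueFun hγ0 hγ1 hKh, Jval_eq_tsum,
    hw.tsum_eq_zero_add]
  simp only [pow_zero, one_mul, one_mulVec]
  ring

end Markov

theorem Jval_sub_Jval_le {S A : Type*} [Fintype S] [Fintype A] {P : S → A → S → ℝ}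
    {r : S → A → ℝ} {γ U : ℝ} {πh πn : S → A → ℝ} (hγ0 : 0 ≤ γ) (hγ1 : γ < 1)
    (hP0 : ∀ s a s', 0 ≤ P s a s') (hP1 : ∀ s a, ∑ s', P s a s' = 1)
    (hh0 : ∀ s a, 0 ≤ πh s a) (hh1 : ∀ s, ∑ a, πh s a = 1)
    (hn0 : ∀ s a, 0 ≤ πn s a) (hn1 : ∀ s, ∑ a, πn s a = 1)
    (hU : ∀ s a a', |Qfun P r γ πh s a - Qfun P r γ πh s a'| ≤ U) (hU0 : 0 ≤ U)
    {dpref : S → ℝ} (hpref0 : ∀ s, 0 ≤ dpref s) (d0 : S → ℝ) :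
    Jval P r γ πh d0 - Jval P r γ πn d0 ≤
      U / (1 - γ) * (∑ s, dpref s * tvDist (πh s) (πn s) + 2 * tvDist (dOcc P γ πn d0) dpref) := by
  classical
  set g : S → ℝ := fun s => ∑ a, (πh s a - πn s a) * Qfun P r γ πh s a
  have hg : ∀ s, |g s| ≤ U * tvDist (πh s) (πn s) := fun s => by
    simpa only [g, sub_mul, Finset.sum_sub_distrib] using
      abs_sum_mul_sub_sum_mul_le_of_oscillation ((hh1 s).trans (hn1 s).symm) (hU s)
  have hgU : ∀ s, |g s| ≤ U := fun s =>
    (hg s).trans (mul_le_of_le_one_right hU0 (tvDist_le_one (hh0 s) (hn0 s) (hh1 s) (hn1 s)))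
  have hpref : ∑ s, dpref s * g s ≤ U * ∑ s, dpref s * tvDist (πh s) (πn s) := by
    rw [Finset.mul_sum]
    exact Finset.sum_le_sum fun s _ => (mul_le_mul_of_nonneg_left ((le_abs_self _).trans (hg s))
      (hpref0 s)).trans_eq (by ring)
  have hshift := (le_abs_self _).trans
    (abs_sum_mul_sub_sum_mul_le (p := dOcc P γ πn d0) (q := dpref) hgU)
  have hocc : ∀ s, ∑' t : ℕ, γ ^ t * visit P πn d0 t s = dOcc P γ πn d0 s / (1 - γ) :=
    fun s => by rw [dOcc, mul_div_cancel_left₀ _ (sub_ne_zero.2 hγ1.ne')]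
  rw [performance_difference hγ0 hγ1 (transitionMatrix_mem_rowStochastic hP0 hP1 hh0 hh1)
    (transitionMatrix_mem_rowStochastic hP0 hP1 hn0 hn1)]
  simp only [hocc, div_mul_eq_mul_div, ← Finset.sum_div]
  rw [div_le_div_iff_of_pos_right (by linarith)]
  linarith

section Preference

variable {S A : Type*}

noncomputable def pairLoss (β : ℝ) (p : A → ℝ) (x : A × A) : ℝ :=
  -Real.log (sigmoid (β * (Real.log (p x.1) - Real.log (p x.2))))

def idealPairs (πh πn : S → A → ℝ) : S → A × A → ℝ := fun s x => πh s x.1 * πn s x.2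

theorem abs_pairLoss_le {β M : ℝ} (hβ : 0 ≤ β) {p : A → ℝ}
    (hM : ∀ a b, |Real.log (p a) - Real.log (p b)| ≤ M) (x : A × A) :
    |pairLoss β p x| ≤ β * M + Real.log 2 := by
  rw [pairLoss, abs_of_nonneg (neg_log_sigmoid_nonneg _)]
  refine (neg_log_sigmoid_le_abs_add_log_two _).trans ?_
  rw [abs_mul, abs_of_nonneg hβ]
  gcongr
  exact hM x.1 x.2

variable [Fintype S] [Fintype A]

theorem Lpref_eq_sum_pairLoss (dpref : S → ℝ) (ρ : S → A × A → ℝ) (β : ℝ) (π : S → A → ℝ) :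
    Lpref dpref ρ β π = ∑ s, dpref s * ∑ x, ρ s x * pairLoss β (π s) x := rfl

theorem sum_prod_mul_mul_sub {p q : A → ℝ} (hp1 : ∑ a, p a = 1) (hq1 : ∑ a, q a = 1)
    (f : A → ℝ) (c : ℝ) :
    ∑ x : A × A, p x.1 * q x.2 * (f x.1 - f x.2 - c) = ∑ a, (p a - q a) * f a - c := by
  simp only [Fintype.sum_prod_type, mul_sub, Finset.sum_sub_distrib, mul_assoc,
    ← Finset.mul_sum, ← Finset.sum_mul, hp1, hq1, sub_mul, one_mul]

theorem two_mul_tvDist_sq_le_sum_pairLoss_sub {β M : ℝ} (hβ : 0 ≤ β) {p q : A → ℝ}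
    (hp0 : ∀ a, 0 < p a) (hq0 : ∀ a, 0 < q a) (hp1 : ∑ a, p a = 1) (hq1 : ∑ a, q a = 1)
    (hM : ∀ a b, |Real.log (p a) - Real.log (p b)| ≤ M) :
    2 * β * tvDist p q ^ 2 - β ^ 2 * M ^ 2 / 8 ≤
      ∑ x : A × A, p x.1 * q x.2 * (pairLoss β q x - pairLoss β p x) := by
  set φ : A → ℝ := fun a => β / 2 * (Real.log (p a) - Real.log (q a))
  have hpoint : ∀ x : A × A,
      φ x.1 - φ x.2 - β ^ 2 * M ^ 2 / 8 ≤ pairLoss β q x - pairLoss β p x := fun x => by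
    have hq := neg_half_add_log_two_le_neg_log_sigmoid (β * (Real.log (q x.1) - Real.log (q x.2)))
    have hp := neg_log_sigmoid_le_neg_half_add_log_two_add_sq
      (β * (Real.log (p x.1) - Real.log (p x.2)))
    have hsq : (β * (Real.log (p x.1) - Real.log (p x.2))) ^ 2 ≤ β ^ 2 * M ^ 2 := by
      rw [mul_pow]
      exact mul_le_mul_of_nonneg_left
        (sq_le_sq' (abs_le.1 (hM x.1 x.2)).1 (abs_le.1 (hM x.1 x.2)).2) (sq_nonneg β)
    simp only [pairLoss, φ]
    linarith
  calc 2 * β * tvDist p q ^ 2 - β ^ 2 * M ^ 2 / 8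
      ≤ β / 2 * ∑ a, (p a - q a) * (Real.log (p a) - Real.log (q a)) - β ^ 2 * M ^ 2 / 8 := by
        have := four_mul_tvDist_sq_le_sum_mul_log_sub_log hp0 hq0 hp1 hq1
        nlinarith
    _ = ∑ x : A × A, p x.1 * q x.2 * (φ x.1 - φ x.2 - β ^ 2 * M ^ 2 / 8) := by
        rw [sum_prod_mul_mul_sub hp1 hq1, Finset.mul_sum]
        simp only [φ, mul_left_comm]
    _ ≤ _ := Finset.sum_le_sum fun x _ =>
        mul_le_mul_of_nonneg_left (hpoint x) (mul_pos (hp0 x.1) (hq0 x.2)).le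

theorem Lpref_sub_Lpref_le {dpref : S → ℝ} (hd0 : ∀ s, 0 ≤ dpref s) {ρ ρ' : S → A × A → ℝ}
    {β B : ℝ} {πh πn : S → A → ℝ} (hh : ∀ s x, |pairLoss β (πh s) x| ≤ B)
    (hn : ∀ s x, |pairLoss β (πn s) x| ≤ B) :
    Lpref dpref ρ' β πn - Lpref dpref ρ' β πh ≤
      Lpref dpref ρ β πn - Lpref dpref ρ β πh + 4 * B * ∑ s, dpref s * tvDist (ρ' s) (ρ s) := by
  have hswap : ∀ π : S → A → ℝ, (∀ s x, |pairLoss β (π s) x| ≤ B) →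
      |Lpref dpref ρ' β π - Lpref dpref ρ β π| ≤ 2 * B * ∑ s, dpref s * tvDist (ρ' s) (ρ s) :=
    fun π hπ => by
    rw [Lpref_eq_sum_pairLoss, Lpref_eq_sum_pairLoss, ← Finset.sum_sub_distrib, Finset.mul_sum]
    refine (Finset.abs_sum_le_sum_abs _ _).trans (Finset.sum_le_sum fun s _ => ?_)
    rw [← mul_sub, abs_mul, abs_of_nonneg (hd0 s), mul_left_comm]
    exact mul_le_mul_of_nonneg_left (abs_sum_mul_sub_sum_mul_le (hπ s)) (hd0 s)
  have hn' := abs_le.1 (hswap πn hn)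
  have hh' := abs_le.1 (hswap πh hh)
  linarith [hn'.2, hh'.1]

theorem sum_mul_tvDist_le_sqrt {dpref : S → ℝ} (hd0 : ∀ s, 0 ≤ dpref s)
    (hd1 : ∑ s, dpref s = 1) {β M : ℝ} (hβ : 0 < β) {πh πn : S → A → ℝ}
    (hh0 : ∀ s a, 0 < πh s a) (hh1 : ∀ s, ∑ a, πh s a = 1)
    (hn0 : ∀ s a, 0 < πn s a) (hn1 : ∀ s, ∑ a, πn s a = 1)
    (hhM : ∀ s a b, |Real.log (πh s a) - Real.log (πh s b)| ≤ M) :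
    ∑ s, dpref s * tvDist (πh s) (πn s) ≤
      Real.sqrt ((Lpref dpref (idealPairs πh πn) β πn - Lpref dpref (idealPairs πh πn) β πh) /
        (2 * β) + β * M ^ 2 / 16) := by
  have hjensen : (∑ s, dpref s * tvDist (πh s) (πn s)) ^ 2 ≤
      ∑ s, dpref s * tvDist (πh s) (πn s) ^ 2 := by
    simpa [hd1] using Finset.sum_sq_le_sum_mul_sum_of_sq_le_mul Finset.univ
      (fun s _ => hd0 s) (fun s _ => mul_nonneg (hd0 s) (sq_nonneg (tvDist (πh s) (πn s))))
      (fun s _ => le_of_eq (by ring))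
  have hstate : ∀ s, tvDist (πh s) (πn s) ^ 2 ≤
      (∑ x, idealPairs πh πn s x * (pairLoss β (πn s) x - pairLoss β (πh s) x)) / (2 * β) +
        β * M ^ 2 / 16 := fun s => by
    have := two_mul_tvDist_sq_le_sum_pairLoss_sub hβ.le (hh0 s) (hn0 s) (hh1 s) (hn1 s) (hhM s)
    rw [div_add' _ _ _ (by positivity), le_div_iff₀ (by positivity)]
    simp only [idealPairs]
    linarith
  refine (le_abs_self _).trans (Real.abs_le_sqrt (hjensen.trans ?_))
  calc ∑ s, dpref s * tvDist (πh s) (πn s) ^ 2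
      ≤ ∑ s, dpref s * ((∑ x, idealPairs πh πn s x *
          (pairLoss β (πn s) x - pairLoss β (πh s) x)) / (2 * β) + β * M ^ 2 / 16) :=
        Finset.sum_le_sum fun s _ => mul_le_mul_of_nonneg_left (hstate s) (hd0 s)
    _ = _ := by
        simp only [Lpref_eq_sum_pairLoss, mul_add, Finset.sum_add_distrib, ← Finset.sum_mul, hd1,
          one_mul, mul_div_assoc', ← Finset.sum_div, ← Finset.sum_sub_distrib, ← mul_sub]

end Preference

theorem ppl_main_bound_general {S A : Type*} [Fintype S] [Fintype A]
    (P : S → A → S → ℝ) (r : S → A → ℝ) (γ : ℝ) (d0 : S → ℝ)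
    (πh πn : S → A → ℝ) (dpref : S → ℝ) (ρpref : S → A × A → ℝ)
    (U M β : ℝ)
    (hγ0 : 0 < γ) (hγ1 : γ < 1) (hβ : 0 < β)
    (hP0 : ∀ s a s', 0 ≤ P s a s') (hP1 : ∀ s a, ∑ s', P s a s' = 1)
    (hh0 : ∀ s a, 0 < πh s a) (hh1 : ∀ s, ∑ a, πh s a = 1)
    (hn0 : ∀ s a, 0 < πn s a) (hn1 : ∀ s, ∑ a, πn s a = 1)
    (hpref0 : ∀ s, 0 ≤ dpref s) (hpref1 : ∑ s, dpref s = 1)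
    (hU : ∀ s a a', |Qfun P r γ πh s a - Qfun P r γ πh s a'| ≤ U)
    (hhM : ∀ s a a', |Real.log (πh s a) - Real.log (πh s a')| ≤ M)
    (hnM : ∀ s a a', |Real.log (πn s a) - Real.log (πn s a')| ≤ M) :
    Jval P r γ πh d0 - Jval P r γ πn d0 ≤
      (U / (1 - γ)) *
        (Real.sqrt
          (((Lpref dpref ρpref β πn - Lpref dpref ρpref β πh) +
              4 * (β * M + Real.log 2) *
                ∑ s, dpref s *
                  tvDist (fun p : A × A => πh s p.1 * πn s p.2) (ρpref s)) /
              (2 * β) +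
            β * M ^ 2 / 8) +
          2 * tvDist (dOcc P γ πn d0) dpref) := by
  obtain ⟨s0, -⟩ := Finset.nonempty_of_sum_ne_zero (hpref1 ▸ one_ne_zero : ∑ s, dpref s ≠ 0)
  obtain ⟨a0, -⟩ := Finset.nonempty_of_sum_ne_zero (hh1 s0 ▸ one_ne_zero : ∑ a, πh s0 a ≠ 0)
  have hU0 : 0 ≤ U := (abs_nonneg _).trans (hU s0 a0 a0)
  have hgap := Jval_sub_Jval_le hγ0.le hγ1 hP0 hP1 (fun s a => (hh0 s a).le) hh1
    (fun s a => (hn0 s a).le) hn1 hU hU0 hpref0 d0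
  have htv := sum_mul_tvDist_le_sqrt hpref0 hpref1 hβ hh0 hh1 hn0 hn1 hhM
  have hmis := Lpref_sub_Lpref_le hpref0 (ρ := ρpref) (ρ' := idealPairs πh πn)
    (fun s => abs_pairLoss_le hβ.le (hhM s)) (fun s => abs_pairLoss_le hβ.le (hnM s))
  have hc : 0 ≤ U / (1 - γ) := div_nonneg hU0 (by linarith)
  calc Jval P r γ πh d0 - Jval P r γ πn d0
      ≤ U / (1 - γ) * (∑ s, dpref s * tvDist (πh s) (πn s) + 2 * tvDist (dOcc P γ πn d0) dpref) :=
        hgap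
    _ ≤ _ := by
        gcongr
        refine htv.trans (Real.sqrt_le_sqrt (add_le_add ?_ ?_))
        · exact div_le_div_of_nonneg_right hmis (by positivity)
        · have := mul_nonneg hβ.le (sq_nonneg M)
          linarith

/-- Main bound (Theorem 2, formal statement): the performance gap of the
novice policy is controlled by the optimization error, the preference-label
misalignment, and the state distribution shift. -/
theorem ppl_main_bound {S A : Type*} [Fintype S] [Fintype A]
    (P : S → A → S → ℝ) (r : S → A → ℝ) (γ : ℝ) (d0 : S → ℝ)
    (πh πn : S → A → ℝ) (dpref : S → ℝ) (ρpref : S → A × A → ℝ)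
    (U M β : ℝ)
    (hγ0 : 0 < γ) (hγ1 : γ < 1) (hβ : 0 < β)
    (hP0 : ∀ s a s', 0 ≤ P s a s') (hP1 : ∀ s a, ∑ s', P s a s' = 1)
    (hd0 : ∀ s, 0 ≤ d0 s) (hd1 : ∑ s, d0 s = 1)
    (hh0 : ∀ s a, 0 < πh s a) (hh1 : ∀ s, ∑ a, πh s a = 1)
    (hn0 : ∀ s a, 0 < πn s a) (hn1 : ∀ s, ∑ a, πn s a = 1)
    (hpref0 : ∀ s, 0 ≤ dpref s) (hpref1 : ∑ s, dpref s = 1)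
    (hρ0 : ∀ s p, 0 ≤ ρpref s p) (hρ1 : ∀ s, ∑ p, ρpref s p = 1)
    (hU : ∀ s a a', |Qfun P r γ πh s a - Qfun P r γ πh s a'| ≤ U)
    (hhM : ∀ s a a', |Real.log (πh s a) - Real.log (πh s a')| ≤ M)
    (hnM : ∀ s a a', |Real.log (πn s a) - Real.log (πn s a')| ≤ M)
    (hε : 0 ≤ Lpref dpref ρpref β πn - Lpref dpref ρpref β πh) :
    Jval P r γ πh d0 - Jval P r γ πn d0 ≤
      (U / (1 - γ)) *
        (Real.sqrt
          (((Lpref dpref ρpref β πn - Lpref dpref ρpref β πh) +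
              4 * (β * M + Real.log 2) *
                ∑ s, dpref s *
                  tvDist (fun p : A × A => πh s p.1 * πn s p.2) (ρpref s)) /
              (2 * β) +
            β * M ^ 2 / 8) +
          2 * tvDist (dOcc P γ πn d0) dpref) :=
  ppl_main_bound_general P r γ d0 πh πn dpref ρpref U M β hγ0 hγ1 hβ hP0 hP1 hh0 hh1 hn0 hn1 hpref0
    hpref1 hU hhM hnM
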